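/- Given a ranked tree shape with n leaves and k cherries, there are exactly 2^(n-1-k) ranked oriented trees mapped to it by the forgetful map that forgets the left/right orientation of children. -/

import Mathlib

/-- A rooted binary tree with ordered (left/right) children. -/
inductive OTree : Type
  | leaf : OTree
  | node : OTree → OTree → OTree
deriving DecidableEq

/-- Number of leaves. -/
def OTree.nLeaves : OTree → ℕ
  | .leaf => 1
  | .node l r => l.nLeaves + r.nLeaves

/-- Number of internal nodes. -/
def OTree.nInt : OTree → ℕ
  | .leaf => 0
  | .node l r => l.nInt + r.nInt + 1

/-- `t.isInt p` : the path `p` (`true` = left) leads to an internal node of `t`. -/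
def OTree.isInt : OTree → List Bool → Prop
  | .leaf, _ => False
  | .node _ _, [] => True
  | .node l _, true :: p => l.isInt p
  | .node _ r, false :: p => r.isInt p

/-- `t.isLf p` : the path `p` leads to a leaf of `t`. -/
def OTree.isLf : OTree → List Bool → Prop
  | .leaf, [] => True
  | .leaf, _ :: _ => False
  | .node _ _, [] => False
  | .node l _, true :: p => l.isLf p
  | .node _ r, false :: p => r.isLf p

/-- A ranking of the internal nodes of `t`: a bijection to `{1,…,n-1}` (here `Fin t.nInt`)
which strictly increases along every root-to-leaf path. -/
structure Ranking (t : OTree) where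
  rk : {p : List Bool // t.isInt p} → Fin t.nInt
  bij : Function.Bijective rk
  mono : ∀ p q : {p : List Bool // t.isInt p}, p.1 <+: q.1 → p.1 ≠ q.1 → rk p < rk q

/-- A ranked oriented tree. -/
def RankedOTree := Σ t : OTree, Ranking t

/-- Reorient a tree by swapping the two children at every position `p` with `σ p = true`. -/
def OTree.reorient (σ : List Bool → Bool) : OTree → OTree
  | .leaf => .leaf
  | .node l r =>
    let l' := l.reorient (fun p => σ (true :: p))
    let r' := r.reorient (fun p => σ (false :: p))
    if σ [] then .node r' l' else .node l' r'

/-- The induced map on paths: position `p` of `t` corresponds to `pmap σ p` of `t.reorient σ`. -/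
def pmap (σ : List Bool → Bool) : List Bool → List Bool
  | [] => []
  | b :: p => (xor b (σ [])) :: pmap (fun q => σ (b :: q)) p

/-- Two ranked oriented trees have the same ranked tree shape: some reorientation sends one to
the other, matching ranks. -/
def ShapeRel (x y : RankedOTree) : Prop :=
  ∃ σ : List Bool → Bool, y.1 = x.1.reorient σ ∧
    ∀ (p : {p : List Bool // x.1.isInt p}) (h : y.1.isInt (pmap σ p.1)),
      (y.2.rk ⟨pmap σ p.1, h⟩ : ℕ) = (x.2.rk p : ℕ)

/-- Number of cherries (internal nodes whose two children are both leaves). -/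
def OTree.nCherries : OTree → ℕ
  | .leaf => 0
  | .node .leaf .leaf => 1
  | .node l r => l.nCherries + r.nCherries

/-!
Reorientations `σ : List Bool → Bool` act on ranked oriented trees, and the class of `x` is
its orbit. Ranks are distinct, so two reorientations give the same ranked tree exactly when
they send every internal node of `x` to the same position. Where an internal child of `p` is
sent records whether `σ` swaps at `p`, while a swap at a cherry changes nothing. Hence the
orbit is in bijection with the choices of swaps at the `n - 1 - k` internal nodes that are not
cherries.
-/

def pmapInv (σ : List Bool → Bool) : List Bool → List Bool
  | [] => []
  | b :: p => xor b (σ []) :: pmapInv (fun q => σ (xor b (σ []) :: q)) p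

theorem pmapInv_pmap (σ : List Bool → Bool) (p : List Bool) : pmapInv σ (pmap σ p) = p := by
  induction p generalizing σ with
  | nil => rfl
  | cons b p ih => simp only [pmap, pmapInv, Bool.xor_assoc, Bool.xor_self, Bool.xor_false, ih]

theorem pmap_pmapInv (σ : List Bool → Bool) (p : List Bool) : pmap σ (pmapInv σ p) = p := by
  induction p generalizing σ with
  | nil => rfl
  | cons b p ih => simp only [pmap, pmapInv, Bool.xor_assoc, Bool.xor_self, Bool.xor_false, ih]

theorem pmap_append (σ : List Bool → Bool) (p q : List Bool) :
    pmap σ (p ++ q) = pmap σ p ++ pmap (fun s => σ (p ++ s)) q := by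
  induction p generalizing σ with
  | nil => rfl
  | cons b p ih => simp only [List.cons_append, pmap, ih]

theorem pmap_concat (σ : List Bool → Bool) (p : List Bool) (b : Bool) :
    pmap σ (p ++ [b]) = pmap σ p ++ [xor b (σ p)] := by
  simp [pmap_append, pmap]

theorem pmapInv_append (σ : List Bool → Bool) (p q : List Bool) :
    pmapInv σ (p ++ q) = pmapInv σ p ++ pmapInv (fun s => σ (pmapInv σ p ++ s)) q := by
  induction p generalizing σ with
  | nil => rfl
  | cons b p ih => simp only [List.cons_append, pmapInv, ih]

theorem pmapInv_prefix (σ : List Bool → Bool) {p q : List Bool} (h : p <+: q) :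
    pmapInv σ p <+: pmapInv σ q := by
  obtain ⟨r, rfl⟩ := h
  rw [pmapInv_append]
  exact List.prefix_append _ _

theorem pmap_false (p : List Bool) : pmap (fun _ => false) p = p := by
  induction p with
  | nil => rfl
  | cons b p ih => simp [pmap, ih]

theorem pmap_pmap (σ τ : List Bool → Bool) (p : List Bool) :
    pmap τ (pmap σ p) = pmap (fun q => xor (σ q) (τ (pmap σ q))) p := by
  induction p generalizing σ τ with
  | nil => rfl
  | cons b p ih => simp only [pmap, ih, Bool.xor_assoc]

theorem pmap_congr {σ σ' : List Bool → Bool} {p : List Bool}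
    (h : ∀ q, q <+: p → q ≠ p → σ q = σ' q) : pmap σ p = pmap σ' p := by
  induction p generalizing σ σ' with
  | nil => rfl
  | cons b p ih =>
    simp only [pmap]
    rw [h [] List.nil_prefix (List.cons_ne_nil b p).symm,
      ih fun q ⟨r, hr⟩ hne => h (b :: q) ⟨r, by simp [hr]⟩ (by simpa using hne)]

namespace OTree

theorem nLeaves_eq_nInt_add_one (t : OTree) : t.nLeaves = t.nInt + 1 := by
  induction t with
  | leaf => rfl
  | node l r ihl ihr => simp only [nLeaves, nInt, ihl, ihr]; omega

theorem isInt_of_isInt_append {t : OTree} {p q : List Bool} (h : t.isInt (p ++ q)) :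
    t.isInt p := by
  induction t generalizing p with
  | leaf => exact h.elim
  | node l r ihl ihr =>
    match p, h with
    | [], _ => trivial
    | true :: _, h => exact ihl h
    | false :: _, h => exact ihr h

theorem reorient_false (t : OTree) : t.reorient (fun _ => false) = t := by
  induction t with
  | leaf => rfl
  | node l r ihl ihr => simp [reorient, ihl, ihr]

theorem nInt_reorient (σ : List Bool → Bool) (t : OTree) : (t.reorient σ).nInt = t.nInt := by
  induction t generalizing σ with
  | leaf => rfl
  | node l r ihl ihr => cases hσ : σ [] <;> simp [reorient, nInt, hσ, ihl, ihr, Nat.add_comm]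

theorem isInt_reorient_pmap (σ : List Bool → Bool) (t : OTree) (p : List Bool) :
    (t.reorient σ).isInt (pmap σ p) ↔ t.isInt p := by
  induction t generalizing σ p with
  | leaf => simp [reorient, isInt]
  | node l r ihl ihr =>
    rcases p with _ | ⟨_ | _, p⟩ <;> cases hσ : σ [] <;> simp [reorient, pmap, isInt, *]

theorem isInt_reorient (σ : List Bool → Bool) (t : OTree) (q : List Bool) :
    (t.reorient σ).isInt q ↔ t.isInt (pmapInv σ q) := by
  conv_lhs => rw [← pmap_pmapInv σ q]
  exact isInt_reorient_pmap σ t _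

def pathEquivReorient (t : OTree) (σ : List Bool → Bool) :
    {p // t.isInt p} ≃ {q // (t.reorient σ).isInt q} where
  toFun p := ⟨pmap σ p.1, (t.isInt_reorient_pmap σ p.1).2 p.2⟩
  invFun q := ⟨pmapInv σ q.1, (t.isInt_reorient σ q.1).1 q.2⟩
  left_inv p := Subtype.ext (pmapInv_pmap σ p.1)
  right_inv q := Subtype.ext (pmap_pmapInv σ q.1)

theorem reorient_reorient (t : OTree) (σ τ : List Bool → Bool) :
    (t.reorient σ).reorient τ = t.reorient (fun p => xor (σ p) (τ (pmap σ p))) := by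
  induction t generalizing σ τ with
  | leaf => rfl
  | node l r ihl ihr =>
    cases hσ : σ [] <;> cases hτ : τ [] <;> simp [reorient, hσ, hτ, ihl, ihr, pmap]

def nonCherryNodes : OTree → Finset (List Bool)
  | .leaf => ∅
  | .node .leaf .leaf => ∅
  | .node l r =>
    insert [] (l.nonCherryNodes.map ⟨(true :: ·), List.cons_injective⟩ ∪
      r.nonCherryNodes.map ⟨(false :: ·), List.cons_injective⟩)

theorem mem_nonCherryNodes {t : OTree} {p : List Bool} :
    p ∈ t.nonCherryNodes ↔ ∃ c, t.isInt (p ++ [c]) := by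
  induction t generalizing p with
  | leaf => simp [nonCherryNodes, isInt]
  | node l r ihl ihr =>
    rcases l with _ | ⟨a, b⟩ <;> rcases r with _ | ⟨c, d⟩ <;>
      rcases p with _ | ⟨_ | _, p⟩ <;> simp [nonCherryNodes, isInt, ← ihl, ← ihr]

theorem nonCherryNodes_node {l r : OTree} (h : ¬(l = leaf ∧ r = leaf)) :
    (node l r).nonCherryNodes =
      insert [] (l.nonCherryNodes.map ⟨(true :: ·), List.cons_injective⟩ ∪
        r.nonCherryNodes.map ⟨(false :: ·), List.cons_injective⟩) := by
  rcases l with _ | _ <;> rcases r with _ | _ <;> first | exact absurd ⟨rfl, rfl⟩ h | rfl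

theorem nCherries_node {l r : OTree} (h : ¬(l = leaf ∧ r = leaf)) :
    (node l r).nCherries = l.nCherries + r.nCherries := by
  rcases l with _ | _ <;> rcases r with _ | _ <;> first | exact absurd ⟨rfl, rfl⟩ h | rfl

theorem card_nonCherryNodes_add_nCherries (t : OTree) :
    t.nonCherryNodes.card + t.nCherries = t.nInt := by
  induction t with
  | leaf => rfl
  | node l r ihl ihr =>
    by_cases hcherry : l = leaf ∧ r = leaf
    · obtain ⟨rfl, rfl⟩ := hcherry
      rfl
    have hdisj : Disjoint (l.nonCherryNodes.map ⟨(true :: ·), List.cons_injective⟩)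
        (r.nonCherryNodes.map ⟨(false :: ·), List.cons_injective⟩) := by
      simp [Finset.disjoint_left]
    rw [nonCherryNodes_node hcherry, nCherries_node hcherry, Finset.card_insert_of_notMem (by simp),
      Finset.card_union_of_disjoint hdisj, Finset.card_map, Finset.card_map, nInt]
    omega

theorem mem_nonCherryNodes_of_isInt_of_prefix {t : OTree} {p q : List Bool} (hp : t.isInt p)
    (hqp : q <+: p) (hne : q ≠ p) : q ∈ t.nonCherryNodes := by
  obtain ⟨_ | ⟨c, r⟩, rfl⟩ := hqp
  · exact absurd (List.append_nil q).symm hne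
  · exact mem_nonCherryNodes.2 ⟨c, isInt_of_isInt_append (q := r) (by simpa using hp)⟩

theorem pmap_congr_of_isInt {t : OTree} {σ σ' : List Bool → Bool}
    (h : ∀ q ∈ t.nonCherryNodes, σ q = σ' q) {p : List Bool} (hp : t.isInt p) :
    pmap σ p = pmap σ' p :=
  pmap_congr fun q hqp hne => h q (mem_nonCherryNodes_of_isInt_of_prefix hp hqp hne)

theorem reorient_congr {t : OTree} {σ σ' : List Bool → Bool}
    (h : ∀ p ∈ t.nonCherryNodes, σ p = σ' p) : t.reorient σ = t.reorient σ' := by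
  induction t generalizing σ σ' with
  | leaf => rfl
  | node l r ihl ihr =>
    by_cases hcherry : l = leaf ∧ r = leaf
    · obtain ⟨rfl, rfl⟩ := hcherry
      simp [reorient]
    have hroot : σ [] = σ' [] := h [] (by simp [nonCherryNodes_node hcherry])
    have hl := ihl fun p hp =>
      h (true :: p) (mem_nonCherryNodes.2 (mem_nonCherryNodes.1 hp : ∃ c, l.isInt (p ++ [c])))
    have hr := ihr fun p hp =>
      h (false :: p) (mem_nonCherryNodes.2 (mem_nonCherryNodes.1 hp : ∃ c, r.isInt (p ++ [c])))
    simp only [reorient, hroot, hl, hr]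

end OTree

namespace Ranking

variable {t : OTree}

theorem rk_congr (R : Ranking t) {p q : List Bool} (hp : t.isInt p) (hq : t.isInt q)
    (h : p = q) : R.rk ⟨p, hp⟩ = R.rk ⟨q, hq⟩ := by
  subst h
  rfl

theorem ext {R R' : Ranking t} (h : ∀ p, R.rk p = R'.rk p) : R = R' := by
  obtain ⟨rk, _, _⟩ := R
  obtain ⟨rk', _, _⟩ := R'
  obtain rfl : rk = rk' := funext h
  rfl

def reorient (R : Ranking t) (σ : List Bool → Bool) : Ranking (t.reorient σ) where
  rk := finCongr (t.nInt_reorient σ).symm ∘ R.rk ∘ (t.pathEquivReorient σ).symm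
  bij := (finCongr _).bijective.comp (R.bij.comp (t.pathEquivReorient σ).symm.bijective)
  mono p q hpq hne := by
    refine R.mono _ _ (pmapInv_prefix σ hpq) fun h => hne ?_
    rw [← pmap_pmapInv σ p.1, ← pmap_pmapInv σ q.1]
    exact congrArg (pmap σ) h

theorem reorient_rk_pmap (R : Ranking t) (σ : List Bool → Bool) {p : List Bool}
    (hp : t.isInt p) (h : (t.reorient σ).isInt (pmap σ p)) :
    ((R.reorient σ).rk ⟨pmap σ p, h⟩ : ℕ) = R.rk ⟨p, hp⟩ :=
  congrArg Fin.val (R.rk_congr _ hp (pmapInv_pmap σ p))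

end Ranking

namespace RankedOTree

def reorient (σ : List Bool → Bool) (x : RankedOTree) : RankedOTree :=
  ⟨x.1.reorient σ, x.2.reorient σ⟩

theorem reorient_eq_iff {σ : List Bool → Bool} {x y : RankedOTree} :
    x.reorient σ = y ↔ y.1 = x.1.reorient σ ∧
      ∀ (p : {p : List Bool // x.1.isInt p}) (h : y.1.isInt (pmap σ p.1)),
        (y.2.rk ⟨pmap σ p.1, h⟩ : ℕ) = (x.2.rk p : ℕ) := by
  constructor
  · rintro rfl
    exact ⟨rfl, fun p h => x.2.reorient_rk_pmap σ p.2 h⟩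
  · obtain ⟨t, R⟩ := y
    rintro ⟨rfl, hR⟩
    refine congrArg (Sigma.mk _) (Ranking.ext fun ⟨q, hq⟩ => Fin.ext ?_)
    have hq' := (x.1.isInt_reorient σ q).1 hq
    have hq'' : (x.1.reorient σ).isInt (pmap σ (pmapInv σ q)) := by rwa [pmap_pmapInv]
    calc ((x.2.reorient σ).rk ⟨q, hq⟩ : ℕ) = x.2.rk ⟨pmapInv σ q, hq'⟩ := rfl
      _ = R.rk ⟨pmap σ (pmapInv σ q), hq''⟩ := (hR ⟨_, hq'⟩ hq'').symm
      _ = R.rk ⟨q, hq⟩ := congrArg Fin.val (R.rk_congr _ hq (pmap_pmapInv σ q))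

theorem shapeRel_iff_exists_reorient {x y : RankedOTree} :
    ShapeRel x y ↔ ∃ σ, x.reorient σ = y :=
  exists_congr fun _ => reorient_eq_iff.symm

theorem reorient_false (x : RankedOTree) : x.reorient (fun _ => false) = x :=
  reorient_eq_iff.2 ⟨x.1.reorient_false.symm, fun p h =>
    congrArg Fin.val (x.2.rk_congr h p.2 (pmap_false p.1))⟩

theorem reorient_reorient (σ τ : List Bool → Bool) (x : RankedOTree) :
    (x.reorient σ).reorient τ = x.reorient (fun p => xor (σ p) (τ (pmap σ p))) := by
  refine (reorient_eq_iff.2 ⟨x.1.reorient_reorient σ τ, fun p h => ?_⟩).symm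
  have hσ := (x.1.isInt_reorient_pmap σ p.1).2 p.2
  have hτ : ((x.1.reorient σ).reorient τ).isInt (pmap τ (pmap σ p.1)) := by
    rwa [pmap_pmap]
  calc (((x.reorient σ).reorient τ).2.rk ⟨_, h⟩ : ℕ)
      = ((x.reorient σ).reorient τ).2.rk ⟨pmap τ (pmap σ p.1), hτ⟩ :=
        congrArg Fin.val (Ranking.rk_congr _ h hτ (pmap_pmap σ τ p.1).symm)
    _ = (x.reorient σ).2.rk ⟨pmap σ p.1, hσ⟩ := (x.reorient σ).2.reorient_rk_pmap τ hσ hτ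
    _ = x.2.rk p := x.2.reorient_rk_pmap σ p.2 hσ

theorem reorient_reorient_inv (σ : List Bool → Bool) (x : RankedOTree) :
    (x.reorient σ).reorient (fun q => σ (pmapInv σ q)) = x := by
  have hid : (fun p => xor (σ p) (σ (pmapInv σ (pmap σ p)))) = fun _ => false := by
    funext p
    simp [pmapInv_pmap]
  rw [reorient_reorient, hid, reorient_false]

theorem shapeRel_equivalence : Equivalence ShapeRel where
  refl x := shapeRel_iff_exists_reorient.2 ⟨_, x.reorient_false⟩
  symm := by
    simp only [shapeRel_iff_exists_reorient]
    rintro x _ ⟨σ, rfl⟩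
    exact ⟨_, x.reorient_reorient_inv σ⟩
  trans := by
    simp only [shapeRel_iff_exists_reorient]
    rintro x _ _ ⟨σ, rfl⟩ ⟨τ, rfl⟩
    exact ⟨_, (x.reorient_reorient σ τ).symm⟩

theorem pmap_eq_pmap_of_reorient_eq {σ σ' : List Bool → Bool} {x : RankedOTree}
    (h : x.reorient σ = x.reorient σ') {p : List Bool} (hp : x.1.isInt p) :
    pmap σ p = pmap σ' p := by
  obtain ⟨hshape, hrk⟩ := reorient_eq_iff.1 h
  have hσ : (x.reorient σ').1.isInt (pmap σ p) := by
    rw [hshape]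
    exact (x.1.isInt_reorient_pmap σ p).2 hp
  have hσ' := (x.1.isInt_reorient_pmap σ' p).2 hp
  have hsame :
      (x.reorient σ').2.rk ⟨pmap σ p, hσ⟩ = (x.reorient σ').2.rk ⟨pmap σ' p, hσ'⟩ :=
    Fin.ext ((hrk ⟨p, hp⟩ hσ).trans (x.2.reorient_rk_pmap σ' hp hσ').symm)
  exact congrArg Subtype.val ((x.reorient σ').2.bij.injective hsame)

theorem reorient_eq_reorient_iff {σ σ' : List Bool → Bool} {x : RankedOTree} :
    x.reorient σ = x.reorient σ' ↔ ∀ p ∈ x.1.nonCherryNodes, σ p = σ' p := by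
  constructor
  · intro h p hp
    obtain ⟨c, hc⟩ := OTree.mem_nonCherryNodes.1 hp
    have hchild := pmap_eq_pmap_of_reorient_eq h hc
    rw [pmap_concat, pmap_concat] at hchild
    simpa using (List.append_inj' hchild rfl).2
  · intro h
    refine reorient_eq_iff.2 ⟨OTree.reorient_congr fun p hp => (h p hp).symm, fun p hp => ?_⟩
    have hpσ' := (x.1.isInt_reorient_pmap σ' p.1).2 p.2
    calc ((x.reorient σ').2.rk ⟨pmap σ p.1, hp⟩ : ℕ)
        = (x.reorient σ').2.rk ⟨pmap σ' p.1, hpσ'⟩ :=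
          congrArg Fin.val (Ranking.rk_congr _ hp hpσ' (OTree.pmap_congr_of_isInt h p.2))
      _ = x.2.rk p := x.2.reorient_rk_pmap σ' p.2 hpσ'

theorem card_subtype_shapeRel (x : RankedOTree) :
    Nat.card {y // ShapeRel x y} = 2 ^ x.1.nonCherryNodes.card := by
  let extend (s : x.1.nonCherryNodes → Bool) : List Bool → Bool :=
    Function.extend Subtype.val s fun _ => false
  have hextend (s : x.1.nonCherryNodes → Bool) (p : x.1.nonCherryNodes) : extend s p = s p :=
    Subtype.val_injective.extend_apply _ _ p
  let Φ (s : x.1.nonCherryNodes → Bool) : {y // ShapeRel x y} :=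
    ⟨x.reorient (extend s), shapeRel_iff_exists_reorient.2 ⟨_, rfl⟩⟩
  have hΦ : Function.Bijective Φ := by
    constructor
    · intro s s' h
      funext p
      rw [← hextend s p, ← hextend s' p]
      exact reorient_eq_reorient_iff.1 (congrArg Subtype.val h) p p.2
    · rintro ⟨y, hy⟩
      obtain ⟨σ, rfl⟩ := shapeRel_iff_exists_reorient.1 hy
      exact ⟨fun p => σ p,
        Subtype.ext (reorient_eq_reorient_iff.2 fun p hp => hextend _ ⟨p, hp⟩)⟩
  rw [← Nat.card_eq_of_bijective Φ hΦ, Nat.card_fun, Nat.card_eq_finsetCard,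
    Nat.card_eq_fintype_card, Fintype.card_bool]

end RankedOTree

/-- a ranked tree shape with n leaves and k cherries has exactly 2^(n-1-k)
ranked oriented trees mapping to it under the forgetful map; here the shape is represented
by any ranked oriented tree `x`, and the preimage of the shape is the equivalence class of `x`. -/
theorem stmt1 (x : RankedOTree) (n k : ℕ)
    (hn : x.1.nLeaves = n) (hk : x.1.nCherries = k) :
    Nat.card {y : RankedOTree // Relation.EqvGen ShapeRel x y} = 2 ^ (n - 1 - k) := by
  have hclass : {y // Relation.EqvGen ShapeRel x y} ≃ {y // ShapeRel x y} :=
    Equiv.subtypeEquivRight fun _ => RankedOTree.shapeRel_equivalence.eqvGen_iff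
  have hcount : x.1.nonCherryNodes.card = n - 1 - k := by
    have hnodes := x.1.card_nonCherryNodes_add_nCherries
    have hleaves := x.1.nLeaves_eq_nInt_add_one
    omega
  rw [Nat.card_congr hclass, RankedOTree.card_subtype_shapeRel, hcount]
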